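/- Let Θ, σ, ℰ, ρ : ℝ → ℝ satisfy the silent-universe ODE system ρ' = −ρΘ, Θ' = −Θ²/3 − ρ/2 − 6σ² + Λ, σ' = −(2/3)Θσ + σ² − ℰ, ℰ' = −ρσ/2 − 3ℰσ − ℰΘ, and define II = Θ²/3 − 3σ², III = Θ³/27 − Θσ² − 2σ³, |C|² = 48ℰ². Then the identity (∂_t + Θ)III − (∂_t + Θ)²II + Λ(∂_t + Θ)Θ − |C|²/8 + ρ²/6 − Λρ/6 − Λ²/3 = 0 holds. -/

import Mathlib

/-!
`II` and `III` are the second and third elementary symmetric functions of the eigenvalues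
`Θ/3 + σ, Θ/3 + σ, Θ/3 - 2σ` of the expansion tensor. The identity involves derivatives of `Θ`
and `σ` of order at most two. The first derivatives are given by the evolution equations, and
differentiating these once more (which brings in `ρ'` and `ℰ'`) gives the second ones. After
that substitution every term is a polynomial in `ρ, Θ, σ, ℰ, Λ`, and the identity is a
polynomial identity.
-/

namespace SilentUniverse

noncomputable abbrev secondInvariant (Θ σ : ℝ → ℝ) : ℝ → ℝ :=
  fun r => Θ r ^ 2 / 3 - 3 * σ r ^ 2

noncomputable abbrev thirdInvariant (Θ σ : ℝ → ℝ) : ℝ → ℝ :=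
  fun r => Θ r ^ 3 / 27 - Θ r * σ r ^ 2 - 2 * σ r ^ 3

variable {Θ σ : ℝ → ℝ}

theorem hasDerivAt_secondInvariant {Θ' σ' t : ℝ} (hΘ : HasDerivAt Θ Θ' t)
    (hσ : HasDerivAt σ σ' t) :
    HasDerivAt (secondInvariant Θ σ) (2 / 3 * Θ t * Θ' - 6 * σ t * σ') t := by
  refine (((hΘ.pow 2).div_const 3).sub ((hσ.pow 2).const_mul 3)).congr_deriv ?_
  push_cast
  ring

theorem hasDerivAt_thirdInvariant {Θ' σ' t : ℝ} (hΘ : HasDerivAt Θ Θ' t)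
    (hσ : HasDerivAt σ σ' t) :
    HasDerivAt (thirdInvariant Θ σ)
      (Θ t ^ 2 * Θ' / 9 - Θ' * σ t ^ 2 - 2 * Θ t * σ t * σ' - 6 * σ t ^ 2 * σ') t := by
  refine ((((hΘ.pow 3).div_const 27).sub (hΘ.mul (hσ.pow 2))).sub
    ((hσ.pow 3).const_mul 2)).congr_deriv ?_
  push_cast [Pi.pow_apply]
  ring

theorem hasDerivAt_deriv_secondInvariant_add_mul {Θ' σ' : ℝ → ℝ} {Θ'' σ'' t : ℝ}
    (hΘ : ∀ s, HasDerivAt Θ (Θ' s) s) (hσ : ∀ s, HasDerivAt σ (σ' s) s)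
    (hΘ' : HasDerivAt Θ' Θ'' t) (hσ' : HasDerivAt σ' σ'' t) :
    HasDerivAt (fun s => deriv (secondInvariant Θ σ) s + Θ s * secondInvariant Θ σ s)
      (2 / 3 * (Θ' t ^ 2 + Θ t * Θ'') - 6 * (σ' t ^ 2 + σ t * σ'')
        + Θ' t * secondInvariant Θ σ t + Θ t * (2 / 3 * Θ t * Θ' t - 6 * σ t * σ' t)) t := by
  have hII : deriv (secondInvariant Θ σ) = fun s => 2 / 3 * Θ s * Θ' s - 6 * σ s * σ' s :=
    funext fun s => (hasDerivAt_secondInvariant (hΘ s) (hσ s)).deriv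
  rw [hII]
  refine (((((hΘ t).const_mul (2 / 3)).mul hΘ').sub (((hσ t).const_mul 6).mul hσ')).add
    ((hΘ t).mul (hasDerivAt_secondInvariant (hΘ t) (hσ t)))).congr_deriv ?_
  ring

end SilentUniverse

open SilentUniverse in
/-- Local verification of the Gauss–Bonnet–Chern relation for silent model universes:
with `ρ' = −ρΘ`, `Θ' = −Θ²/3 − ρ/2 − 6σ² + Λ`, `σ' = −(2/3)Θσ + σ² − ℰ`,
`ℰ' = −ρσ/2 − 3ℰσ − ℰΘ`, and `II = Θ²/3 − 3σ²`, `III = Θ³/27 − Θσ² − 2σ³`,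
`|C|² = 48ℰ²`, one has
`(∂_t + Θ)III − (∂_t + Θ)²II + Λ(∂_t + Θ)Θ − |C|²/8 + ρ²/6 − Λρ/6 − Λ²/3 = 0`. -/
theorem silent_universe_GBC_identity (Λ : ℝ) (ρ Θ σ ℰ : ℝ → ℝ)
    (hρ : ∀ t, HasDerivAt ρ (-(ρ t * Θ t)) t)
    (hΘ : ∀ t, HasDerivAt Θ (-(Θ t ^ 2) / 3 - ρ t / 2 - 6 * σ t ^ 2 + Λ) t)
    (hσ : ∀ t, HasDerivAt σ (-(2 / 3) * Θ t * σ t + σ t ^ 2 - ℰ t) t)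
    (hℰ : ∀ t, HasDerivAt ℰ (-(ρ t * σ t) / 2 - 3 * ℰ t * σ t - ℰ t * Θ t) t) :
    ∀ t,
      (deriv (fun s => Θ s ^ 3 / 27 - Θ s * σ s ^ 2 - 2 * σ s ^ 3) t
          + Θ t * (Θ t ^ 3 / 27 - Θ t * σ t ^ 2 - 2 * σ t ^ 3))
      - (deriv (fun s =>
            deriv (fun r => Θ r ^ 2 / 3 - 3 * σ r ^ 2) s
              + Θ s * (Θ s ^ 2 / 3 - 3 * σ s ^ 2)) t
          + Θ t * (deriv (fun r => Θ r ^ 2 / 3 - 3 * σ r ^ 2) t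
              + Θ t * (Θ t ^ 2 / 3 - 3 * σ t ^ 2)))
      + Λ * (deriv Θ t + Θ t ^ 2)
      - 48 * ℰ t ^ 2 / 8 + ρ t ^ 2 / 6 - Λ * ρ t / 6 - Λ ^ 2 / 3 = 0 := by
  intro t
  have hΘ' := (((((hΘ t).pow 2).neg.div_const 3).sub ((hρ t).div_const 2)).sub
    (((hσ t).pow 2).const_mul 6)).add_const Λ
  have hσ' := ((((hΘ t).const_mul (-(2 / 3))).mul (hσ t)).add ((hσ t).pow 2)).sub (hℰ t)
  rw [(hasDerivAt_thirdInvariant (hΘ t) (hσ t)).deriv,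
    (hasDerivAt_deriv_secondInvariant_add_mul hΘ hσ hΘ' hσ').deriv,
    (hasDerivAt_secondInvariant (hΘ t) (hσ t)).deriv, (hΘ t).deriv]
  ring
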